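/- For all α, β, γ ∈ [0,1], the full-filtering survival rate S₁₁ = Tr[(√M₁ ⊗ √M₁) ρ' (√M₁ ⊗ √M₁)†], where M₁ = diag(β,α) so √M₁ = diag(√β,√α), equals (β²(1+γ²) + 2αβγ(1−γ) + α²(1−γ)²)/2. -/

import Mathlib

open Matrix Kronecker

/-- Amplitude-damping Kraus operator E₀ = [[1,0],[0,√(1−γ)]]. -/
noncomputable def E0 (γ : ℝ) : Matrix (Fin 2) (Fin 2) ℂ :=
  !![1, 0; 0, (Real.sqrt (1 - γ) : ℂ)]

/-- Amplitude-damping Kraus operator E₁ = [[0,√γ],[0,0]]. -/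
noncomputable def E1 (γ : ℝ) : Matrix (Fin 2) (Fin 2) ℂ :=
  !![0, (Real.sqrt γ : ℂ); 0, 0]

/-- The Bell state vector |Φ⁺⟩ = (|00⟩ + |11⟩)/√2, indexed by pairs (a,b) ∈ {0,1}². -/
noncomputable def phi : (Fin 2 × Fin 2) → ℂ :=
  fun p => if p.1 = p.2 then ((1 / Real.sqrt 2 : ℝ) : ℂ) else 0

/-- The Bell density matrix ρ = |Φ⁺⟩⟨Φ⁺|. -/
noncomputable def ρBell : Matrix (Fin 2 × Fin 2) (Fin 2 × Fin 2) ℂ :=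
  Matrix.vecMulVec phi (star phi)

/-- The family of amplitude-damping Kraus operators. -/
noncomputable def Ekraus (γ : ℝ) : Fin 2 → Matrix (Fin 2) (Fin 2) ℂ := ![E0 γ, E1 γ]

/-- The amplitude-damped Bell state
ρ' = Σ_{j,k} (E_j ⊗ E_k) ρ (E_j ⊗ E_k)†. -/
noncomputable def ρ' (γ : ℝ) : Matrix (Fin 2 × Fin 2) (Fin 2 × Fin 2) ℂ :=
  ∑ j : Fin 2, ∑ k : Fin 2,
    (Ekraus γ j ⊗ₖ Ekraus γ k) * ρBell * (Ekraus γ j ⊗ₖ Ekraus γ k)ᴴ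

/-- √M₁ = diag(√β, √α), the square root of the transmitting POVM element
M₁ = diag(β, α) of Gisin's local filter. -/
noncomputable def sqrtM1 (α β : ℝ) : Matrix (Fin 2) (Fin 2) ℂ :=
  !![(Real.sqrt β : ℂ), 0; 0, (Real.sqrt α : ℂ)]

/-!
Filtering commutes with the local channel, `(S ⊗ S)(E_j ⊗ E_k) = S E_j ⊗ S E_k`, and the
filtered Kraus operators keep the amplitude-damping shape `diag(p, q)`, `r |0⟩⟨1|`.
Since `|Φ⁺⟩ = vec(I)/√2`, we have `(A ⊗ B)|Φ⁺⟩ = vec(B Aᵀ)/√2`, so each Kraus pair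
contributes `‖B Aᵀ‖²_F / 2`; for the four pairs this gives `(p⁴ + q⁴ + 2q²r² + r⁴)/2`
with `p² = β`, `q² = α(1 - γ)`, `r² = βγ`.
-/

theorem trace_mul_vecMulVec_star_mul_conjTranspose {R m n : Type*} [CommRing R] [StarRing R]
    [Fintype m] [Fintype n] (A : Matrix m n R) (v : n → R) :
    (A * vecMulVec v (star v) * Aᴴ).trace = star (A *ᵥ v) ⬝ᵥ (A *ᵥ v) := by
  rw [mul_vecMulVec, vecMulVec_mul, ← star_mulVec, trace_vecMulVec, dotProduct_comm]

theorem phi_eq_vec :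
    phi = vec (((1 / Real.sqrt 2 : ℝ) : ℂ) • (1 : Matrix (Fin 2) (Fin 2) ℂ)) := by
  ext ⟨i, j⟩
  simp [phi, one_apply, eq_comm]

theorem trace_kronecker_mul_ρBell_mul_conjTranspose (A B : Matrix (Fin 2) (Fin 2) ℂ) :
    ((A ⊗ₖ B) * ρBell * (A ⊗ₖ B)ᴴ).trace = ((B * Aᵀ)ᴴ * (B * Aᵀ)).trace / 2 := by
  have hc : star ((1 / Real.sqrt 2 : ℝ) : ℂ) * ((1 / Real.sqrt 2 : ℝ) : ℂ) = 1 / 2 := by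
    rw [Complex.star_def, Complex.conj_ofReal, ← Complex.ofReal_mul, div_mul_div_comm, one_mul,
      Real.mul_self_sqrt zero_le_two]
    push_cast
    rfl
  rw [ρBell, trace_mul_vecMulVec_star_mul_conjTranspose, phi_eq_vec, kronecker_mulVec_vec,
    mul_smul_comm, Matrix.mul_one, smul_mul_assoc, vec_smul, star_smul, smul_dotProduct,
    dotProduct_smul, star_vec_dotProduct_vec, smul_smul, hc, smul_eq_mul]
  ring

theorem kronecker_mul_sum_kronecker_conj_mul_conjTranspose {R ι m n : Type*} [CommRing R]
    [StarRing R] [Fintype ι] [Fintype m] [Fintype n] (S T : Matrix n m R)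
    (E : ι → Matrix m m R) (ρ : Matrix (m × m) (m × m) R) :
    (S ⊗ₖ T) * (∑ j, ∑ k, (E j ⊗ₖ E k) * ρ * (E j ⊗ₖ E k)ᴴ) * (S ⊗ₖ T)ᴴ =
      ∑ j, ∑ k, ((S * E j) ⊗ₖ (T * E k)) * ρ * ((S * E j) ⊗ₖ (T * E k))ᴴ := by
  simp only [Matrix.mul_sum, Matrix.sum_mul, mul_kronecker_mul, conjTranspose_mul, Matrix.mul_assoc]

def ampDampingKraus (p q r : ℝ) : Fin 2 → Matrix (Fin 2) (Fin 2) ℂ :=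
  ![!![(p : ℂ), 0; 0, (q : ℂ)], !![0, (r : ℂ); 0, 0]]

theorem Ekraus_eq_ampDampingKraus (γ : ℝ) :
    Ekraus γ = ampDampingKraus 1 (Real.sqrt (1 - γ)) (Real.sqrt γ) := by
  simp [Ekraus, ampDampingKraus, E0, E1]

theorem sqrtM1_mul_ampDampingKraus (α β p q r : ℝ) (j : Fin 2) :
    sqrtM1 α β * ampDampingKraus p q r j =
      ampDampingKraus (Real.sqrt β * p) (Real.sqrt α * q) (Real.sqrt β * r) j := by
  fin_cases j <;> simp [sqrtM1, ampDampingKraus]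

theorem sum_trace_kronecker_ampDampingKraus_mul_ρBell_mul_conjTranspose (p q r : ℝ) :
    ∑ j, ∑ k, ((ampDampingKraus p q r j ⊗ₖ ampDampingKraus p q r k) * ρBell *
        (ampDampingKraus p q r j ⊗ₖ ampDampingKraus p q r k)ᴴ).trace =
      ((((p ^ 2) ^ 2 + (q ^ 2) ^ 2 + 2 * q ^ 2 * r ^ 2 + (r ^ 2) ^ 2) / 2 : ℝ) : ℂ) := by
  simp only [trace_kronecker_mul_ρBell_mul_conjTranspose]
  simp [ampDampingKraus, Fin.sum_univ_two, trace, mul_apply]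
  ring

/-- For all α, β, γ ∈ [0,1], the full-filtering survival rate
S₁₁ = Tr[(√M₁ ⊗ √M₁) ρ' (√M₁ ⊗ √M₁)†] equals
(β²(1+γ²) + 2αβγ(1−γ) + α²(1−γ)²)/2. -/
theorem full_filter_survival_rate (α β γ : ℝ)
    (hα : α ∈ Set.Icc (0:ℝ) 1) (hβ : β ∈ Set.Icc (0:ℝ) 1)
    (hγ : γ ∈ Set.Icc (0:ℝ) 1) :
    ((sqrtM1 α β ⊗ₖ sqrtM1 α β) * ρ' γ * (sqrtM1 α β ⊗ₖ sqrtM1 α β)ᴴ).trace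
      = (((β^2 * (1 + γ^2) + 2 * α * β * γ * (1 - γ) + α^2 * (1 - γ)^2) / 2 : ℝ) : ℂ) := by
  obtain ⟨hα0, -⟩ := hα
  obtain ⟨hβ0, -⟩ := hβ
  obtain ⟨hγ0, hγ1⟩ := hγ
  simp only [ρ', kronecker_mul_sum_kronecker_conj_mul_conjTranspose, trace_sum,
    Ekraus_eq_ampDampingKraus, sqrtM1_mul_ampDampingKraus,
    sum_trace_kronecker_ampDampingKraus_mul_ρBell_mul_conjTranspose, mul_pow,
    Real.sq_sqrt hα0, Real.sq_sqrt hβ0, Real.sq_sqrt hγ0, Real.sq_sqrt (sub_nonneg.2 hγ1)]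
  congr 1
  ring
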